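/- The set Z_{2,W} = {(x_1, x_2) ∈ T² : liminf_{N→∞} |∑_{n=1}^{N} exp(2πi(x_1 n + x_2 n²))| = 0} contains a dense G_δ subset of T². -/

import Mathlib

/-! At `x = (b / 2q, a / q)` with `b` odd, shifting `n` by `q` flips the sign of the `n`-th term,
so the Weyl sum vanishes at every multiple of `2q`; such points are dense in the plane. The set
of `x` whose Weyl sums come within every `ε > 0` of zero infinitely often is a `G_δ` (the sums are
continuous in `x`), contains these points, and is exactly where the liminf vanishes. -/

open Complex Filter

/-- The quadratic Weyl sum `S_2((x₁,x₂); N) = ∑_{n=1}^N e(x₁ n + x₂ n²)`. -/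
noncomputable def quadWeylSum (x : ℝ × ℝ) (N : ℕ) : ℂ :=
  ∑ n ∈ Finset.Icc 1 N,
    Complex.exp (2 * Real.pi * Complex.I * ((x.1 : ℂ) * (n : ℂ) + (x.2 : ℂ) * (n : ℂ) ^ 2))

theorem Function.Antiperiodic.sum_range_two_mul_eq_zero {M : Type*} [AddCommGroup M] {f : ℕ → M}
    {c : ℕ} (h : Antiperiodic f c) : ∑ n ∈ Finset.range (2 * c), f n = 0 := by
  simp [two_mul, Finset.sum_range_add, add_comm c, h _]

theorem Function.Antiperiodic.sum_range_mul_eq_zero {M : Type*} [AddCommGroup M] {f : ℕ → M}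
    {c : ℕ} (h : Antiperiodic f c) (k : ℕ) :
    ∑ n ∈ Finset.range (k * (2 * c)), f n = 0 := by
  induction k with
  | zero => simp
  | succ k ih =>
    have hperiod : ∀ n, f (k * (2 * c) + n) = f n := fun n => by
      rw [add_comm]; exact h.nat_even_mul_periodic k n
    rw [add_one_mul, Finset.sum_range_add, ih, zero_add]
    simp only [hperiod, h.sum_range_two_mul_eq_zero]

theorem isGδ_setOf_forall_pos_frequently_lt {X : Type*} [TopologicalSpace X] {f : ℕ → X → ℝ}
    (hf : ∀ n, Continuous (f n)) : IsGδ {x | ∀ ε > 0, ∃ᶠ n in atTop, f n x < ε} := by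
  have hrepr : {x | ∀ ε > 0, ∃ᶠ n in atTop, f n x < ε}
      = ⋂ (k : ℕ) (m : ℕ), ⋃ n ≥ m, {x | f n x < 1 / (k + 1)} := by
    ext x
    simp only [Set.mem_ofPred_eq, Set.mem_iInter, Set.mem_iUnion, frequently_atTop, exists_prop]
    refine ⟨fun h k => h _ Nat.one_div_pos_of_nat, fun h ε hε m => ?_⟩
    obtain ⟨k, hk⟩ := exists_nat_one_div_lt hε
    obtain ⟨n, hmn, hn⟩ := h k m
    exact ⟨n, hmn, hn.trans hk⟩
  rw [hrepr]
  exact .iInter fun k => .iInter fun m =>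
    (isOpen_biUnion fun n _ => isOpen_lt (hf n) continuous_const).isGδ

theorem Filter.liminf_eq_zero_of_frequently_lt {ι : Type*} {l : Filter ι} {u : ι → ℝ}
    (h0 : 0 ≤ u) (h : ∀ ε > 0, ∃ᶠ i in l, u i < ε) : liminf u l = 0 := by
  have hbdd : IsBoundedUnder (· ≥ ·) l u := isBoundedUnder_of ⟨0, h0⟩
  have hcobdd : IsCoboundedUnder (· ≥ ·) l u :=
    .of_frequently_le ((h 1 one_pos).mono fun _ => le_of_lt)
  refine le_antisymm (le_of_forall_pos_le_add fun ε hε => ?_)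
    (le_liminf_of_le hcobdd (.of_forall h0))
  rw [zero_add]
  exact liminf_le_of_frequently_le ((h ε hε).mono fun _ => le_of_lt) hbdd

noncomputable def quadWeylTerm (x : ℝ × ℝ) (n : ℕ) : ℂ :=
  Complex.exp (2 * Real.pi * Complex.I * ((x.1 : ℂ) * (n : ℂ) + (x.2 : ℂ) * (n : ℂ) ^ 2))

theorem quadWeylSum_eq_sum_range (x : ℝ × ℝ) (N : ℕ) :
    quadWeylSum x N = ∑ n ∈ Finset.range N, quadWeylTerm x (1 + n) := by
  rw [quadWeylSum, ← Finset.Ico_add_one_right_eq_Icc, Finset.sum_Ico_eq_sum_range,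
    Nat.add_sub_cancel]
  rfl

theorem continuous_quadWeylSum (N : ℕ) : Continuous fun x => quadWeylSum x N := by
  unfold quadWeylSum
  fun_prop

theorem Complex.exp_int_mul_pi_mul_I_of_odd {m : ℤ} (hm : Odd m) :
    exp (m * (Real.pi * I)) = -1 := by
  rw [exp_int_mul, exp_pi_mul_I, hm.neg_one_zpow]

-- Shifting `n` by `q` adds `b / 2 + a (2n + q)`, an odd multiple of `1 / 2`, to the phase.
theorem quadWeylTerm_antiperiodic {q : ℕ} (hq : q ≠ 0) (a : ℤ) {b : ℤ} (hb : Odd b) :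
    Function.Antiperiodic (quadWeylTerm (b / (2 * q), a / q)) q := by
  intro n
  have hphase : 2 * Real.pi * I * (((b / (2 * q) : ℝ) : ℂ) * ((n + q : ℕ) : ℂ)
        + ((a / q : ℝ) : ℂ) * ((n + q : ℕ) : ℂ) ^ 2)
      = 2 * Real.pi * I * (((b / (2 * q) : ℝ) : ℂ) * (n : ℂ) + ((a / q : ℝ) : ℂ) * (n : ℂ) ^ 2)
        + ((b + 2 * (a * (2 * n + q)) : ℤ) : ℂ) * (Real.pi * I) := by
    push_cast
    field_simp
    ring
  rw [quadWeylTerm, quadWeylTerm, hphase, exp_add,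
    exp_int_mul_pi_mul_I_of_odd (hb.add_even (even_two_mul _)), mul_neg_one]

theorem quadWeylSum_mul_two_mul_eq_zero {q : ℕ} (hq : q ≠ 0) (a : ℤ) {b : ℤ} (hb : Odd b)
    (k : ℕ) : quadWeylSum (b / (2 * q), a / q) (k * (2 * q)) = 0 := by
  rw [quadWeylSum_eq_sum_range]
  exact ((quadWeylTerm_antiperiodic hq a hb).const_add 1).sum_range_mul_eq_zero k

theorem exists_odd_abs_sub_half_le (y : ℝ) : ∃ b : ℤ, Odd b ∧ |y - b / 2| ≤ 1 / 2 := by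
  refine ⟨2 * ⌊y⌋ + 1, odd_two_mul_add_one _, abs_le.2 ⟨?_, ?_⟩⟩ <;>
  · push_cast
    linarith [Int.floor_le y, Int.lt_floor_add_one y]

theorem dense_setOf_frequently_quadWeylSum_eq_zero :
    Dense {x : ℝ × ℝ | ∃ᶠ N in atTop, quadWeylSum x N = 0} := by
  refine Metric.dense_iff.2 fun x r hr => ?_
  obtain ⟨q, hq⟩ := exists_nat_gt (1 / r)
  have hq0 : (0 : ℝ) < q := (one_div_pos.2 hr).trans hq
  have hq_ne : q ≠ 0 := by rintro rfl; simp at hq0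
  have happrox : ∀ y t : ℝ, |y * q - t| ≤ 1 / 2 → |t / q - y| < r := fun y t h => by
    rw [show t / q - y = -(y * q - t) / q by field_simp; ring, abs_div, abs_neg,
      abs_of_pos hq0, div_lt_iff₀ hq0]
    rw [div_lt_iff₀ hr] at hq
    linarith
  obtain ⟨b, hb, hb_near⟩ := exists_odd_abs_sub_half_le (x.1 * q)
  refine ⟨(b / (2 * q), round (x.2 * q) / q), ?_, ?_⟩
  · rw [Metric.mem_ball, Prod.dist_eq, Real.dist_eq, Real.dist_eq, ← div_div]
    exact max_lt (happrox _ _ hb_near) (happrox _ _ (abs_sub_round _))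
  · refine frequently_atTop.2 fun M => ⟨M * (2 * q), ?_, ?_⟩
    · exact Nat.le_mul_of_pos_right M (by omega)
    · exact quadWeylSum_mul_two_mul_eq_zero hq_ne _ hb M

theorem zero_set_quad_weyl_contains_dense_Gdelta :
    ∃ G : Set (ℝ × ℝ), IsGδ G ∧ Dense G ∧
      G ⊆ {x : ℝ × ℝ | atTop.liminf (fun N => ‖quadWeylSum x N‖) = 0} := by
  refine ⟨{x | ∀ ε > 0, ∃ᶠ N in atTop, ‖quadWeylSum x N‖ < ε},
    isGδ_setOf_forall_pos_frequently_lt fun N => (continuous_quadWeylSum N).norm,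
    dense_setOf_frequently_quadWeylSum_eq_zero.mono fun x hx ε hε => ?_,
    fun x hx => liminf_eq_zero_of_frequently_lt (fun _ => norm_nonneg _) hx⟩
  exact hx.mono fun N hN => by simpa [hN] using hε
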